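/- arXiv:math/0509721 — 2 statements merged into one kernel-verified Lean document; each statement's English description precedes it below -/
import Mathlib

section
/- Let S be a transient random walk on ℤ^d started at 0 (i.e. q := P₀(T₀ < ∞) < 1, where T₀ = inf{n ≥ 1 : S_n = 0}), with local time l_n(0) at the origin. Then for every y > 0, P₀(∑_{x} l_n(x)² ≥ n y) ≥ (P₀(T₀ ≤ n/√(ny)) )^{√(ny)}, where the exponent √(ny) denotes ⌈√(ny)⌉ appropriately; in particular, lim inf_{n→∞} n^{-1/2} log P₀(∑_x l_n(x)² ≥ ny) ≥ √y · log P₀(T₀ < ∞). -/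
/-!
If the walk comes back to the origin `m` times by time `n`, then `l_n(0) ≥ m + 1`, so
`∑_x l_n(x)² ≥ (m + 1)²`. Cutting at the first return time `k`, the event "`m` successive
returns, each within `t` steps of the previous one" is a disjoint union over `k ≤ t` of a
first-return event, which depends on the first `k` increments only, intersected with the same
event for the increments shifted by `k`, which is independent of it and has the same law. Hence
its probability is exactly `P(T₀ ≤ t) ^ m`; take `m + 1 = ⌈√(ny)⌉` and `t = ⌊n / √(ny)⌋`. The
liminf follows because `P(T₀ ≤ t) → P(T₀ < ∞)`. If `P(T₀ < ∞) = 0`, the walk is a.s. injective,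
so the probabilities are `0` or `1` and every logarithm is `0` (`Real.log 0 = 0`).
-/

open MeasureTheory ProbabilityTheory Filter
open scoped Topology

lemma le_liminf_mul_log {w p b : ℕ → ℝ} {m : ℕ → ℕ} {q r : ℝ} (hw : ∀ n, 0 ≤ w n)
    (hmw : Tendsto (fun n => m n * w n) atTop (𝓝 r)) (hp : Tendsto p atTop (𝓝 q)) (hq : 0 < q)
    (hb0 : ∀ n, 0 ≤ b n) (hb1 : ∀ n, b n ≤ 1) (hpb : ∀ᶠ n in atTop, p n ^ m n ≤ b n) :
    r * Real.log q ≤ liminf (fun n => w n * Real.log (b n)) atTop := by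
  have hlim : Tendsto (fun n => m n * w n * Real.log (p n)) atTop (𝓝 (r * Real.log q)) :=
    hmw.mul ((Real.continuousAt_log hq.ne').tendsto.comp hp)
  have hle : ∀ᶠ n in atTop, m n * w n * Real.log (p n) ≤ w n * Real.log (b n) := by
    filter_upwards [hpb, hp.eventually (lt_mem_nhds hq)] with n hn hpos
    rw [mul_comm (m n : ℝ), mul_assoc, ← Real.log_pow]
    exact mul_le_mul_of_nonneg_left (Real.log_le_log (pow_pos hpos _) hn) (hw n)
  rw [← hlim.liminf_eq]
  exact liminf_le_liminf hle hlim.isBoundedUnder_ge (isCoboundedUnder_ge_of_le _ fun n =>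
    mul_nonpos_of_nonneg_of_nonpos (hw n) (Real.log_nonpos (hb0 n) (hb1 n)))

lemma tendsto_natCeil_sqrt_mul_div_sqrt {y : ℝ} (hy : 0 < y) :
    Tendsto (fun n : ℕ => (⌈√(n * y)⌉₊ : ℝ) * (1 / √n)) atTop (𝓝 √y) := by
  have hs : Tendsto (fun n : ℕ => √(n * y)) atTop atTop :=
    Real.tendsto_sqrt_atTop.comp (tendsto_natCast_atTop_atTop.atTop_mul_const hy)
  have := (tendsto_nat_ceil_div_atTop.comp hs).mul_const √y
  rw [one_mul] at this
  refine this.congr' ?_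
  filter_upwards [eventually_ge_atTop 1] with n hn
  have hn' : 0 < √(n : ℝ) := Real.sqrt_pos.2 (by exact_mod_cast hn)
  simp only [Function.comp_apply, Real.sqrt_mul (Nat.cast_nonneg n)]
  field_simp

lemma tendsto_div_sqrt_mul {y : ℝ} (hy : 0 < y) :
    Tendsto (fun n : ℕ => (n : ℝ) / √(n * y)) atTop atTop := by
  have : ∀ n : ℕ, (n : ℝ) / √(n * y) = √n / √y := fun n => by
    rw [Real.sqrt_mul (Nat.cast_nonneg n), ← div_div, Real.div_sqrt]
  simp only [this]
  exact (Real.tendsto_sqrt_atTop.comp tendsto_natCast_atTop_atTop).atTop_div_const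
    (Real.sqrt_pos.2 hy)

lemma tendsto_measure_exists_le {Ω : Type*} [MeasurableSpace Ω] (μ : Measure Ω)
    (P : ℕ → Ω → Prop) :
    Tendsto (fun r : ℝ => μ {ω | ∃ k : ℕ, 1 ≤ k ∧ (k : ℝ) ≤ r ∧ P k ω}) atTop
      (𝓝 (μ {ω | ∃ k : ℕ, 1 ≤ k ∧ P k ω})) := by
  have hunion : ⋃ r : ℝ, {ω | ∃ k : ℕ, 1 ≤ k ∧ (k : ℝ) ≤ r ∧ P k ω}
      = {ω | ∃ k : ℕ, 1 ≤ k ∧ P k ω} := by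
    ext ω
    simp only [Set.mem_iUnion, Set.mem_ofPred_eq]
    exact ⟨fun ⟨_, k, hk, _, hP⟩ => ⟨k, hk, hP⟩, fun ⟨k, hk, hP⟩ => ⟨k, k, hk, le_rfl, hP⟩⟩
  rw [← hunion]
  exact tendsto_measure_iUnion_atTop fun r r' hr ω ⟨k, hk, hkr, hP⟩ => ⟨k, hk, hkr.trans hr, hP⟩

namespace RandomWalk

open Finset

section Combinatorics

variable {α : Type*} {V : Type*} [AddCommGroup V]

def walk (x : ℕ → V) (k : ℕ) : V := ∑ i ∈ range k, x i

def shift (k : ℕ) (x : ℕ → α) : ℕ → α := fun i => x (k + i)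

@[simp] lemma walk_zero (x : ℕ → V) : walk x 0 = 0 := sum_range_zero x

lemma walk_shift (x : ℕ → V) (k j : ℕ) : walk (shift k x) j = walk x (k + j) - walk x k :=
  (sum_range_add_sub_sum_range x k j).symm

def increments {Ω : Type*} (S : ℕ → Ω → V) (ω : Ω) : ℕ → V := fun k => S (k + 1) ω - S k ω

lemma walk_increments {Ω : Type*} {S : ℕ → Ω → V} (h0 : ∀ ω, S 0 ω = 0) (ω : Ω) :
    walk (increments S ω) = (S · ω) := by
  funext k
  exact (Finset.sum_range_sub (S · ω) k).trans (by rw [h0, sub_zero])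

def firstReturnAt (k : ℕ) : Set (ℕ → V) :=
  {x | walk x k = 0 ∧ ∀ j, 1 ≤ j → j < k → walk x j ≠ 0}

def returnBy (t : ℕ) : Set (ℕ → V) := {x | ∃ k, 1 ≤ k ∧ k ≤ t ∧ walk x k = 0}

/-- `m` successive returns to the origin, each within time `t` of the previous one, indexed by the
first return time so that the union is disjoint. -/
def returnsWithin (t : ℕ) : ℕ → Set (ℕ → V)
  | 0 => Set.univ
  | m + 1 => ⋃ k ∈ Icc 1 t, firstReturnAt k ∩ shift k ⁻¹' returnsWithin t m

lemma pairwiseDisjoint_firstReturnAt (t : ℕ) :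
    ((Icc 1 t : Finset ℕ) : Set ℕ).PairwiseDisjoint (firstReturnAt (V := V)) := by
  intro k hk k' hk' hne
  rw [coe_Icc, Set.mem_Icc] at hk hk'
  rcases hne.lt_or_gt with h | h
  · exact Set.disjoint_left.2 fun x hx hx' => hx'.2 k hk.1 h hx.1
  · exact Set.disjoint_left.2 fun x hx hx' => hx.2 k' hk'.1 h hx'.1

lemma iUnion_firstReturnAt (t : ℕ) : ⋃ k ∈ Icc 1 t, firstReturnAt k = returnBy (V := V) t := by
  ext x
  simp only [Set.mem_iUnion, mem_Icc, returnBy, firstReturnAt, Set.mem_ofPred_eq, exists_prop]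
  constructor
  · rintro ⟨k, ⟨hk1, hkt⟩, hk0, -⟩
    exact ⟨k, hk1, hkt, hk0⟩
  · rintro ⟨k, hk1, hkt, hk0⟩
    classical
    have hex : ∃ k, 1 ≤ k ∧ walk x k = 0 := ⟨k, hk1, hk0⟩
    exact ⟨Nat.find hex, ⟨(Nat.find_spec hex).1, (Nat.find_min' hex ⟨hk1, hk0⟩).trans hkt⟩,
      (Nat.find_spec hex).2, fun j hj hjk h => Nat.find_min hex hjk ⟨hj, h⟩⟩

variable [DecidableEq α]

def localTime (f : ℕ → α) (n : ℕ) (a : α) : ℕ := #{j ∈ range (n + 1) | f j = a}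

def selfIntersection (f : ℕ → α) (n : ℕ) : ℝ :=
  ∑ a ∈ (range (n + 1)).image f, (localTime f n a : ℝ) ^ 2

lemma localTime_mono (f : ℕ → α) (a : α) {n n' : ℕ} (h : n ≤ n') :
    localTime f n a ≤ localTime f n' a :=
  card_le_card (filter_subset_filter _ (range_subset_range.2 (by omega)))

lemma localTime_shift_add_one_le (f : ℕ → α) {k n n' : ℕ} (hk : 1 ≤ k) (h : k + n' ≤ n) :
    localTime (shift k f) n' (f 0) + 1 ≤ localTime f n (f 0) := by
  have hnot : 0 ∉ {j ∈ range (n' + 1) | shift k f j = f 0}.map (addLeftEmbedding k) := by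
    simp only [Finset.mem_map, addLeftEmbedding_apply]
    omega
  have hsub : insert 0 ({j ∈ range (n' + 1) | shift k f j = f 0}.map (addLeftEmbedding k))
      ⊆ {j ∈ range (n + 1) | f j = f 0} := by
    intro j
    simp only [mem_insert, Finset.mem_map, mem_filter, mem_range, addLeftEmbedding_apply]
    rintro (rfl | ⟨i, ⟨hi, hfi⟩, rfl⟩)
    · exact ⟨by omega, rfl⟩
    · exact ⟨by omega, hfi⟩
  simpa [localTime, card_insert_of_notMem hnot] using card_le_card hsub

lemma sq_localTime_le_selfIntersection (f : ℕ → α) {n j : ℕ} (hj : j ≤ n) :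
    (localTime f n (f j) : ℝ) ^ 2 ≤ selfIntersection f n :=
  single_le_sum (f := fun a => (localTime f n a : ℝ) ^ 2) (fun _ _ => sq_nonneg _)
    (mem_image_of_mem f (mem_range.2 (by omega)))

lemma selfIntersection_of_injective {f : ℕ → α} (hf : Function.Injective f) (n : ℕ) :
    selfIntersection f n = n + 1 := by
  rw [selfIntersection, sum_image hf.injOn]
  have : ∀ j ∈ range (n + 1), (localTime f n (f j) : ℝ) ^ 2 = 1 := fun j hj => by
    simp [localTime, hf.eq_iff, filter_eq', hj]
  simp [sum_congr rfl this]

lemma add_one_le_localTime_of_mem_returnsWithin [DecidableEq V] {t m : ℕ} {x : ℕ → V}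
    (hx : x ∈ returnsWithin t m) : m + 1 ≤ localTime (walk x) (m * t) 0 := by
  induction m generalizing x with
  | zero => simp [localTime, filter_singleton]
  | succ m ih =>
    simp only [returnsWithin, Set.mem_iUnion, mem_Icc, Set.mem_inter_iff, Set.mem_preimage] at hx
    obtain ⟨k, ⟨hk1, hkt⟩, ⟨hk0, -⟩, hshift⟩ := hx
    have hwalk : walk (shift k x) = shift k (walk x) := by
      funext j
      rw [walk_shift, hk0, sub_zero, shift]
    have ih' := ih hshift
    rw [hwalk] at ih'
    have := localTime_shift_add_one_le (walk x) hk1 (n := (m + 1) * t) (n' := m * t)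
      (by rw [add_one_mul]; omega)
    rw [walk_zero] at this
    omega

lemma returnsWithin_subset_selfIntersection [DecidableEq V] {t m n : ℕ} (h : m * t ≤ n) :
    returnsWithin t m ⊆ {x : ℕ → V | ((m + 1 : ℕ) : ℝ) ^ 2 ≤ selfIntersection (walk x) n} := by
  intro x hx
  have hloc := (add_one_le_localTime_of_mem_returnsWithin hx).trans (localTime_mono (walk x) 0 h)
  have := sq_localTime_le_selfIntersection (walk x) (Nat.zero_le n)
  rw [walk_zero] at this
  exact le_trans (by gcongr) this

end Combinatorics

section IidSequence

variable {V : Type*} [mV : MeasurableSpace V]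

lemma measurable_shift (k : ℕ) : Measurable (shift (α := V) k) :=
  measurable_pi_lambda _ fun i => measurable_pi_apply (k + i)

lemma measurePreserving_shift (ρ : Measure V) [IsProbabilityMeasure ρ] (k : ℕ) :
    MeasurePreserving (shift k) (Measure.infinitePi fun _ => ρ) (Measure.infinitePi fun _ => ρ) :=
  ⟨measurable_shift k, Measure.map_infinitePi_infinitePi_of_inj (add_right_injective k)⟩

variable (V) in
abbrev coordsLT (k : ℕ) : MeasurableSpace (ℕ → V) :=
  ⨆ i ∈ Set.Iio k, mV.comap fun x => x i

lemma coordsLT_le (k : ℕ) : coordsLT V k ≤ MeasurableSpace.pi :=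
  iSup₂_le fun i _ => (measurable_pi_apply i).comap_le

lemma measurable_shift_iSup_comap (k : ℕ) :
    Measurable[⨆ i ∈ Set.Ici k, mV.comap fun x : ℕ → V => x i] (shift k) :=
  @measurable_pi_lambda _ _ _ (⨆ i ∈ Set.Ici k, mV.comap fun x : ℕ → V => x i) _ _ fun i =>
    Measurable.of_comap_le (le_iSup₂_of_le (k + i) (Set.mem_Ici.2 (Nat.le_add_right k i)) le_rfl)

lemma indep_coordsLT_comap_shift (ρ : Measure V) [IsProbabilityMeasure ρ] (k : ℕ) :
    Indep (coordsLT V k) (MeasurableSpace.comap (shift k) MeasurableSpace.pi)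
      (Measure.infinitePi fun _ => ρ) := by
  have hcoords : iIndep (fun i => mV.comap fun x : ℕ → V => x i)
      (Measure.infinitePi fun _ => ρ) :=
    (iIndepFun_iff_iIndep _ _ _).1 (iIndepFun_infinitePi (X := fun _ => id) fun _ => measurable_id)
  exact indep_of_indep_of_le_right (indep_iSup_of_disjoint
    (fun i => (measurable_pi_apply i).comap_le) hcoords (Set.Iio_disjoint_Ici le_rfl))
    (measurable_shift_iSup_comap k).comap_le

lemma measure_inter_shift_preimage (ρ : Measure V) [IsProbabilityMeasure ρ] {k : ℕ}
    {A B : Set (ℕ → V)} (hA : MeasurableSet[coordsLT V k] A) (hB : MeasurableSet B) :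
    Measure.infinitePi (fun _ => ρ) (A ∩ shift k ⁻¹' B)
      = Measure.infinitePi (fun _ => ρ) A * Measure.infinitePi (fun _ => ρ) B := by
  rw [(Indep_iff _ _ _).1 (indep_coordsLT_comap_shift ρ k) A _ hA ⟨B, hB, rfl⟩,
    (measurePreserving_shift ρ k).measure_preimage hB.nullMeasurableSet]

variable [AddCommGroup V] [MeasurableAdd₂ V]

lemma measurable_walk (k : ℕ) : Measurable fun x : ℕ → V => walk x k :=
  Finset.measurable_sum _ fun i _ => measurable_pi_apply i

lemma measurable_walk_coordsLT {j k : ℕ} (h : j ≤ k) :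
    Measurable[coordsLT V k] fun x : ℕ → V => walk x j :=
  Finset.measurable_sum _ fun i hi => Measurable.of_comap_le (le_iSup₂_of_le i
    (Set.mem_Iio.2 (lt_of_lt_of_le (Finset.mem_range.1 hi) h)) le_rfl)

variable [MeasurableSingletonClass V]

lemma measurableSet_walk_eq_zero (k : ℕ) : MeasurableSet {x : ℕ → V | walk x k = 0} :=
  measurable_walk k (measurableSet_singleton 0)

lemma measurableSet_firstReturnAt (k : ℕ) : MeasurableSet[coordsLT V k] (firstReturnAt k) := by
  rw [firstReturnAt, Set.ofPred_and]
  refine (measurable_walk_coordsLT le_rfl (measurableSet_singleton 0)).inter ?_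
  simp only [Set.ofPred_forall]
  exact .iInter fun j => .iInter fun _ => .iInter fun hj =>
    (measurable_walk_coordsLT hj.le (measurableSet_singleton 0)).compl

lemma measurableSet_returnsWithin (t m : ℕ) : MeasurableSet (returnsWithin (V := V) t m) := by
  induction m with
  | zero => exact .univ
  | succ m ih => exact .biUnion (Set.to_countable _) fun k _ =>
      (coordsLT_le k _ (measurableSet_firstReturnAt k)).inter (measurable_shift k ih)

lemma measurableSet_returnBy (t : ℕ) : MeasurableSet (returnBy (V := V) t) := by
  rw [← iUnion_firstReturnAt]
  exact .biUnion (Set.to_countable _) fun k _ => coordsLT_le k _ (measurableSet_firstReturnAt k)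

variable (ρ : Measure V) [IsProbabilityMeasure ρ]

theorem measure_returnsWithin (t m : ℕ) :
    Measure.infinitePi (fun _ => ρ) (returnsWithin t m)
      = Measure.infinitePi (fun _ => ρ) (returnBy (V := V) t) ^ m := by
  induction m with
  | zero => simp [returnsWithin]
  | succ m ih =>
    have hreturn : Measure.infinitePi (fun _ => ρ) (returnBy (V := V) t)
        = ∑ k ∈ Icc 1 t, Measure.infinitePi (fun _ => ρ) (firstReturnAt k) := by
      rw [← iUnion_firstReturnAt, measure_biUnion_finset (pairwiseDisjoint_firstReturnAt t)
        fun k _ => coordsLT_le k _ (measurableSet_firstReturnAt k)]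
    rw [returnsWithin, measure_biUnion_finset
      ((pairwiseDisjoint_firstReturnAt t).mono_on fun k _ => Set.inter_subset_left)
      fun k _ => (coordsLT_le k _ (measurableSet_firstReturnAt k)).inter
        (measurable_shift k (measurableSet_returnsWithin t m)),
      pow_succ', ← ih, hreturn, Finset.sum_mul]
    exact Finset.sum_congr rfl fun k _ => measure_inter_shift_preimage ρ
      (measurableSet_firstReturnAt k) (measurableSet_returnsWithin t m)

lemma ae_injective_walk
    (h : ∀ k, 1 ≤ k → Measure.infinitePi (fun _ => ρ) {x : ℕ → V | walk x k = 0} = 0) :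
    ∀ᵐ x ∂(Measure.infinitePi fun _ => ρ), Function.Injective (walk x) := by
  have hpair : ∀ j k, j < k →
      ∀ᵐ x ∂(Measure.infinitePi fun _ => ρ), walk x j ≠ walk x k := by
    intro j k hjk
    have hset : {x : ℕ → V | walk x j = walk x k} = shift j ⁻¹' {x | walk x (k - j) = 0} := by
      ext x
      rw [Set.mem_preimage, Set.mem_ofPred_eq, Set.mem_ofPred_eq, walk_shift,
        Nat.add_sub_cancel' hjk.le, sub_eq_zero, eq_comm]
    refine measure_eq_zero_iff_ae_notMem (s := {x : ℕ → V | walk x j = walk x k}).1 ?_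
    rw [hset, (measurePreserving_shift ρ j).measure_preimage
      (measurableSet_walk_eq_zero (k - j)).nullMeasurableSet]
    exact h (k - j) (by omega)
  have hall : ∀ᵐ x ∂(Measure.infinitePi fun _ => ρ), ∀ j k, j < k → walk x j ≠ walk x k := by
    simpa only [ae_all_iff, eventually_imp_distrib_left] using hpair
  filter_upwards [hall] with x hx j k hjk
  by_contra hne
  rcases Nat.lt_or_gt_of_ne hne with h | h
  · exact hx j k h hjk
  · exact hx k j h hjk.symm

end IidSequence

section Transfer

variable {Ω V : Type*} [MeasurableSpace Ω] {μ : Measure Ω}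
  [AddCommGroup V] [MeasurableSpace V] {S : ℕ → Ω → V}

lemma map_increments [MeasurableSub₂ V] (hmeas : ∀ k, Measurable (S k))
    (hindep : iIndepFun (fun k ω => S (k + 1) ω - S k ω) μ)
    (hident : ∀ k, IdentDistrib (fun ω => S (k + 1) ω - S k ω) (fun ω => S 1 ω - S 0 ω) μ μ) :
    μ.map (increments S) = Measure.infinitePi fun _ => μ.map fun ω => S 1 ω - S 0 ω :=
  (hindep.map_fun_eq_infinitePi_map fun _ => (hmeas _).sub (hmeas _)).trans
    (congrArg Measure.infinitePi (funext fun k => (hident k).map_eq))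

variable [MeasurableAdd₂ V] [MeasurableSingletonClass V] [DecidableEq V]
  {ρ : Measure V} [IsProbabilityMeasure ρ]

theorem pow_measure_le_measure_selfIntersection (hX : Measurable (increments S))
    (hlaw : μ.map (increments S) = Measure.infinitePi fun _ => ρ) (h0 : ∀ ω, S 0 ω = 0)
    {t m n : ℕ} (h : m * t ≤ n) :
    μ {ω | ∃ k, 1 ≤ k ∧ k ≤ t ∧ S k ω = 0} ^ m
      ≤ μ {ω | ((m + 1 : ℕ) : ℝ) ^ 2 ≤ selfIntersection (S · ω) n} := by
  have hpre : ∀ E, MeasurableSet E →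
      μ (increments S ⁻¹' E) = Measure.infinitePi (fun _ => ρ) E := fun E hE => by
    rw [← Measure.map_apply hX hE, hlaw]
  have hreturn : {ω | ∃ k, 1 ≤ k ∧ k ≤ t ∧ S k ω = 0} = increments S ⁻¹' returnBy t := by
    ext ω
    simp [returnBy, walk_increments h0]
  calc μ {ω | ∃ k, 1 ≤ k ∧ k ≤ t ∧ S k ω = 0} ^ m
      = Measure.infinitePi (fun _ => ρ) (returnBy t) ^ m := by
        rw [hreturn, hpre _ (measurableSet_returnBy t)]
    _ = μ (increments S ⁻¹' returnsWithin t m) := by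
        rw [hpre _ (measurableSet_returnsWithin t m), measure_returnsWithin]
    _ ≤ _ := measure_mono fun ω hω => by
        simpa [walk_increments h0] using returnsWithin_subset_selfIntersection h hω

theorem measure_selfIntersection_eq_zero_or_one [IsProbabilityMeasure μ]
    (hX : Measurable (increments S))
    (hlaw : μ.map (increments S) = Measure.infinitePi fun _ => ρ) (h0 : ∀ ω, S 0 ω = 0)
    (hq : μ {ω | ∃ k, 1 ≤ k ∧ S k ω = 0} = 0) (r : ℝ) (n : ℕ) :
    μ {ω | r ≤ selfIntersection (S · ω) n} = 0 ∨ μ {ω | r ≤ selfIntersection (S · ω) n} = 1 := by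
  have hinj : ∀ᵐ ω ∂μ, Function.Injective (S · ω) := by
    have hret : ∀ k, 1 ≤ k → Measure.infinitePi (fun _ => ρ) {x : ℕ → V | walk x k = 0} = 0 := by
      intro k hk
      rw [← hlaw, Measure.map_apply hX (measurableSet_walk_eq_zero k)]
      refine measure_mono_null (fun ω (hω : walk (increments S ω) k = 0) => ?_) hq
      exact ⟨k, hk, by rwa [walk_increments h0] at hω⟩
    filter_upwards [ae_of_ae_map hX.aemeasurable (hlaw ▸ ae_injective_walk ρ hret)] with ω hω
    rwa [walk_increments h0] at hω
  have hae : {ω | r ≤ selfIntersection (S · ω) n} =ᵐ[μ] {ω | r ≤ n + 1} := by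
    filter_upwards [hinj] with ω hω
    change (r ≤ selfIntersection (S · ω) n) = (r ≤ n + 1)
    rw [selfIntersection_of_injective hω]
  rw [measure_congr hae]
  by_cases hr : r ≤ n + 1 <;> simp [hr]

theorem measure_returnBy_pow_ceil_le [IsProbabilityMeasure μ] (hX : Measurable (increments S))
    (hlaw : μ.map (increments S) = Measure.infinitePi fun _ => ρ) (h0 : ∀ ω, S 0 ω = 0)
    {y : ℝ} (hy : 0 < y) {n : ℕ} (hn : 1 ≤ n) :
    μ {ω | ∃ k : ℕ, 1 ≤ k ∧ (k : ℝ) ≤ n / √(n * y) ∧ S k ω = 0} ^ ⌈√(n * y)⌉₊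
      ≤ μ {ω | n * y ≤ selfIntersection (S · ω) n} := by
  set s := √(n * y)
  have hs : 0 < s := Real.sqrt_pos.2 (by positivity)
  obtain ⟨m, hm⟩ : ∃ m, ⌈s⌉₊ = m + 1 := Nat.exists_eq_add_one.2 (Nat.ceil_pos.2 hs)
  have hreturn : {ω | ∃ k : ℕ, 1 ≤ k ∧ (k : ℝ) ≤ n / s ∧ S k ω = 0}
      = {ω | ∃ k, 1 ≤ k ∧ k ≤ ⌊n / s⌋₊ ∧ S k ω = 0} := by
    simp only [Nat.le_floor_iff (by positivity : 0 ≤ (n : ℝ) / s)]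
  have hmt : m * ⌊n / s⌋₊ ≤ n := by
    have hms : (m : ℝ) ≤ s := by
      have := Nat.ceil_lt_add_one hs.le
      rw [hm, Nat.cast_add_one] at this
      linarith
    have := mul_le_mul hms (Nat.floor_le (by positivity : 0 ≤ (n : ℝ) / s)) (by positivity) hs.le
    rw [mul_div_cancel₀ _ hs.ne'] at this
    exact_mod_cast this
  have hsq : (n : ℝ) * y ≤ ((m + 1 : ℕ) : ℝ) ^ 2 := by
    rw [← hm, ← Real.sq_sqrt (by positivity : (0 : ℝ) ≤ n * y)]
    exact pow_le_pow_left₀ (Real.sqrt_nonneg _) (Nat.le_ceil _) 2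
  calc _ ≤ μ {ω | ∃ k : ℕ, 1 ≤ k ∧ (k : ℝ) ≤ n / s ∧ S k ω = 0} ^ m :=
        pow_le_pow_right_of_le_one' prob_le_one (by omega)
    _ ≤ μ {ω | ((m + 1 : ℕ) : ℝ) ^ 2 ≤ selfIntersection (S · ω) n} :=
        hreturn ▸ pow_measure_le_measure_selfIntersection hX hlaw h0 hmt
    _ ≤ _ := measure_mono fun ω hω => hsq.trans hω

theorem sqrt_mul_log_le_liminf [IsProbabilityMeasure μ] (hX : Measurable (increments S))
    (hlaw : μ.map (increments S) = Measure.infinitePi fun _ => ρ) (h0 : ∀ ω, S 0 ω = 0)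
    {y : ℝ} (hy : 0 < y) :
    √y * Real.log (μ {ω | ∃ k : ℕ, 1 ≤ k ∧ S k ω = 0}).toReal
      ≤ liminf (fun n : ℕ => 1 / √n *
          Real.log (μ {ω | n * y ≤ selfIntersection (S · ω) n}).toReal) atTop := by
  rcases eq_or_ne (μ {ω | ∃ k : ℕ, 1 ≤ k ∧ S k ω = 0}) 0 with hq | hq
  · have hzero (n : ℕ) : Real.log (μ {ω | n * y ≤ selfIntersection (S · ω) n}).toReal = 0 := by
      rcases measure_selfIntersection_eq_zero_or_one hX hlaw h0 hq (n * y) n with h | h <;>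
        simp [h]
    simp [hq, hzero]
  refine le_liminf_mul_log (fun n => by positivity) (tendsto_natCeil_sqrt_mul_div_sqrt hy)
    ((ENNReal.tendsto_toReal (measure_ne_top μ _)).comp
      ((tendsto_measure_exists_le μ _).comp (tendsto_div_sqrt_mul hy)))
    (ENNReal.toReal_pos hq (measure_ne_top μ _)) (fun _ => ENNReal.toReal_nonneg)
    (fun _ => measureReal_le_one) ?_
  filter_upwards [eventually_ge_atTop 1] with n hn
  rw [Function.comp_apply, Function.comp_apply, ← ENNReal.toReal_pow]
  exact ENNReal.toReal_mono (measure_ne_top μ _) (measure_returnBy_pow_ceil_le hX hlaw h0 hy hn)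

end Transfer

end RandomWalk

theorem silt_lower_bound_via_returns_general {Ω : Type*} [MeasurableSpace Ω] (μ : Measure Ω)
    [IsProbabilityMeasure μ] (d : ℕ)
    (S : ℕ → Ω → (Fin d → ℤ)) (hmeas : ∀ k, Measurable (S k))
    (h0 : ∀ ω, S 0 ω = 0)
    (hindep : iIndepFun (fun k ω => S (k + 1) ω - S k ω) μ)
    (hident : ∀ k, IdentDistrib (fun ω => S (k + 1) ω - S k ω)
        (fun ω => S 1 ω - S 0 ω) μ μ)
    (y : ℝ) (hy : 0 < y) :
    (∀ n : ℕ, 1 ≤ n →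
      μ {ω | ∃ k : ℕ, 1 ≤ k ∧ (k : ℝ) ≤ (n : ℝ) / Real.sqrt ((n : ℝ) * y) ∧ S k ω = 0}
          ^ (⌈Real.sqrt ((n : ℝ) * y)⌉₊)
        ≤ μ {ω | (n : ℝ) * y ≤ ∑ x ∈ (Finset.range (n + 1)).image (fun k => S k ω),
            ((((Finset.range (n + 1)).filter (fun j => S j ω = x)).card : ℝ)) ^ 2})
    ∧ Real.sqrt y * Real.log (μ {ω | ∃ k : ℕ, 1 ≤ k ∧ S k ω = 0}).toReal
        ≤ atTop.liminf (fun n : ℕ =>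
            (1 / Real.sqrt n) * Real.log
              (μ {ω | (n : ℝ) * y ≤ ∑ x ∈ (Finset.range (n + 1)).image (fun k => S k ω),
                ((((Finset.range (n + 1)).filter (fun j => S j ω = x)).card : ℝ)) ^ 2}).toReal) := by
  have hX : Measurable (RandomWalk.increments S) :=
    measurable_pi_lambda _ fun k => (hmeas _).sub (hmeas _)
  have : IsProbabilityMeasure (μ.map fun ω => S 1 ω - S 0 ω) :=
    Measure.isProbabilityMeasure_map ((hmeas 1).sub (hmeas 0)).aemeasurable
  have hlaw := RandomWalk.map_increments hmeas hindep hident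
  exact ⟨fun n hn => RandomWalk.measure_returnBy_pow_ceil_le hX hlaw h0 hy hn,
    RandomWalk.sqrt_mul_log_le_liminf hX hlaw h0 hy⟩

/-- Lower bound for the self-intersection local time of a transient random walk via
repeated returns to the origin: `P(∑_x l_n(x)² ≥ ny) ≥ P(T₀ ≤ n/√(ny))^{⌈√(ny)⌉}`, and
consequently `liminf n^{-1/2} log P(∑_x l_n(x)² ≥ ny) ≥ √y log P(T₀ < ∞)`. -/
theorem silt_lower_bound_via_returns {Ω : Type*} [MeasurableSpace Ω] (μ : Measure Ω)
    [IsProbabilityMeasure μ] (d : ℕ) (hd : 3 ≤ d)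
    (S : ℕ → Ω → (Fin d → ℤ)) (hmeas : ∀ k, Measurable (S k))
    (h0 : ∀ ω, S 0 ω = 0)
    (hindep : iIndepFun (fun k ω => S (k + 1) ω - S k ω) μ)
    (hident : ∀ k, IdentDistrib (fun ω => S (k + 1) ω - S k ω)
        (fun ω => S 1 ω - S 0 ω) μ μ)
    (hq : μ {ω | ∃ k : ℕ, 1 ≤ k ∧ S k ω = 0} < 1)
    (y : ℝ) (hy : 0 < y) :
    (∀ n : ℕ, 1 ≤ n →
      μ {ω | ∃ k : ℕ, 1 ≤ k ∧ (k : ℝ) ≤ (n : ℝ) / Real.sqrt ((n : ℝ) * y) ∧ S k ω = 0}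
          ^ (⌈Real.sqrt ((n : ℝ) * y)⌉₊)
        ≤ μ {ω | (n : ℝ) * y ≤ ∑ x ∈ (Finset.range (n + 1)).image (fun k => S k ω),
            ((((Finset.range (n + 1)).filter (fun j => S j ω = x)).card : ℝ)) ^ 2})
    ∧ Real.sqrt y * Real.log (μ {ω | ∃ k : ℕ, 1 ≤ k ∧ S k ω = 0}).toReal
        ≤ atTop.liminf (fun n : ℕ =>
            (1 / Real.sqrt n) * Real.log
              (μ {ω | (n : ℝ) * y ≤ ∑ x ∈ (Finset.range (n + 1)).image (fun k => S k ω),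
                ((((Finset.range (n + 1)).filter (fun j => S j ω = x)).card : ℝ)) ^ 2}).toReal) :=
  silt_lower_bound_via_returns_general μ d S hmeas h0 hindep hident y hy
end

section
/- Let η be a centered real random variable with log-Laplace transform Λ(t) = log E[exp(t η)] finite for all t ∈ ℝ, and suppose there are constants C₀, C_∞ such that Λ(t) ≤ C₀ t² for |t| ≤ 1 and Λ(t) ≤ C_∞ t^{α*} for t ≥ 1, with α* > 1. Let (η(x))_{x∈Λ} be i.i.d. copies over a finite set Λ, let (l(x))_{x∈Λ} be nonnegative reals with l(x) ≥ n^b for all x ∈ Λ (with b > 0, n ≥ 1), and suppose ∑_{x∈Λ} l(x)^{α*} ≤ n^{β - b + α* b} y₁ / (2 C_∞). Then P(∑_{x∈Λ} η(x) l(x) ≥ n^β y₁) ≤ exp(-n^{β-b} y₁ / 2). -/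
open MeasureTheory ProbabilityTheory Real

/-!
Exponential Chebyshev with `t = n^{-b}`: independence turns the moment generating function of
`∑ η(x) l(x)` into `exp (∑ Λ(t l(x)))`, every argument `t l(x)` is at least `1` because
`l(x) ≥ n^b`, so the large-`t` bound `Λ(s) ≤ C_∞ s^{α*}` applies termwise, and the hypothesis on
`∑ l(x)^{α*}` makes the resulting exponent at most half of `t n^β y₁ = n^{β-b} y₁`.
-/

section Chernoff

variable {Ω ι : Type*} [MeasurableSpace Ω] {μ : Measure Ω} [IsProbabilityMeasure μ] [Fintype ι]

theorem measureReal_sum_mul_ge_le_exp {η : ι → Ω → ℝ} (hmeas : ∀ x, Measurable (η x))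
    (hindep : iIndepFun η μ) {Λ : ι → ℝ → ℝ}
    (hmgf : ∀ x (s : ℝ), ∫ ω, exp (s * η x ω) ∂μ = exp (Λ x s)) (l : ι → ℝ) (a : ℝ)
    {t : ℝ} (ht : 0 ≤ t) :
    μ.real {ω | a ≤ ∑ x, η x ω * l x} ≤ exp (-t * a + ∑ x, Λ x (t * l x)) := by
  set X : ι → Ω → ℝ := fun x ω => η x ω * l x
  have hXmeas : ∀ x, Measurable (X x) := fun x => (hmeas x).mul_const _
  have hXindep : iIndepFun X μ := hindep.comp _ fun x => measurable_mul_const (l x)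
  have hmgfX : ∀ x, mgf (X x) μ t = exp (Λ x (t * l x)) := fun x => by
    simp only [mgf, X, ← hmgf x (t * l x), mul_comm (η x _), mul_assoc]
  have hint : ∀ x, Integrable (fun ω => exp (t * X x ω)) μ := fun x =>
    .of_integral_ne_zero <| by rw [← mgf, hmgfX x]; exact (exp_pos _).ne'
  have hsum : (∑ x, X x) = fun ω => ∑ x, η x ω * l x := by
    ext ω; simp only [X, Finset.sum_apply]
  calc μ.real {ω | a ≤ ∑ x, η x ω * l x}
      = μ.real {ω | a ≤ (∑ x, X x) ω} := by rw [hsum]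
    _ ≤ exp (-t * a) * mgf (∑ x, X x) μ t :=
        measure_ge_le_exp_mul_mgf a ht (hXindep.integrable_exp_mul_sum hXmeas fun x _ => hint x)
    _ = exp (-t * a + ∑ x, Λ x (t * l x)) := by
        rw [hXindep.mgf_sum hXmeas, exp_add, exp_sum]
        simp only [hmgfX]

end Chernoff

theorem sum_le_mul_sum_rpow_of_one_le {ι : Type*} [Fintype ι] {Λ : ℝ → ℝ} {C α t : ℝ}
    (hΛ : ∀ s, 1 ≤ s → Λ s ≤ C * s ^ α) (ht : 0 ≤ t) {l : ι → ℝ} (hl : ∀ x, 1 ≤ t * l x) :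
    ∑ x, Λ (t * l x) ≤ C * t ^ α * ∑ x, l x ^ α := by
  rw [Finset.mul_sum]
  refine Finset.sum_le_sum fun x _ => ?_
  have hlx : 0 ≤ l x := (pos_of_mul_pos_right (one_pos.trans_le (hl x)) ht).le
  calc Λ (t * l x) ≤ C * (t * l x) ^ α := hΛ _ (hl x)
    _ = C * t ^ α * l x ^ α := by rw [mul_rpow ht hlx, mul_assoc]

theorem rwrs_high_level_chebyshev_general {Ω : Type*} [MeasurableSpace Ω] (μ : Measure Ω)
    [IsProbabilityMeasure μ] {ι : Type*} [Fintype ι]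
    (η : ι → Ω → ℝ) (hmeas : ∀ x, Measurable (η x))
    (hindep : iIndepFun η μ)
    (Λ : ℝ → ℝ) (hmgf : ∀ x (t : ℝ), ∫ ω, Real.exp (t * η x ω) ∂μ = Real.exp (Λ t))
    (Cinf : ℝ) (hCinf : 0 < Cinf)
    (αs : ℝ)
    (hΛinf : ∀ t : ℝ, 1 ≤ t → Λ t ≤ Cinf * t ^ αs)
    (n : ℕ) (hn : 1 ≤ n) (b β y₁ : ℝ)
    (l : ι → ℝ) (hl : ∀ x, (n : ℝ) ^ b ≤ l x)
    (hsum : ∑ x, l x ^ αs ≤ (n : ℝ) ^ (β - b + αs * b) * y₁ / (2 * Cinf)) :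
    μ {ω | (n : ℝ) ^ β * y₁ ≤ ∑ x, η x ω * l x}
      ≤ ENNReal.ofReal (Real.exp (-((n : ℝ) ^ (β - b) * y₁ / 2))) := by
  have hn0 : (0 : ℝ) < n := by exact_mod_cast hn
  set t : ℝ := (n : ℝ) ^ (-b)
  have ht : 0 < t := rpow_pos_of_pos hn0 _
  have htl : ∀ x, 1 ≤ t * l x := fun x => by
    calc 1 = t * (n : ℝ) ^ b := by rw [← rpow_add hn0, neg_add_cancel, rpow_zero]
      _ ≤ t * l x := mul_le_mul_of_nonneg_left (hl x) ht.le
  have hΛsum : ∑ x, Λ (t * l x) ≤ (n : ℝ) ^ (β - b) * y₁ / 2 :=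
    calc ∑ x, Λ (t * l x) ≤ Cinf * t ^ αs * ∑ x, l x ^ αs :=
          sum_le_mul_sum_rpow_of_one_le hΛinf ht.le htl
      _ ≤ Cinf * t ^ αs * ((n : ℝ) ^ (β - b + αs * b) * y₁ / (2 * Cinf)) := by gcongr
      _ = (n : ℝ) ^ (β - b) * y₁ / 2 := by
          rw [← rpow_mul hn0.le]
          field_simp
          rw [← rpow_add hn0]
          ring_nf
  have htβ : t * (n : ℝ) ^ β = (n : ℝ) ^ (β - b) := by
    rw [← rpow_add hn0, neg_add_eq_sub]
  have hchernoff := measureReal_sum_mul_ge_le_exp hmeas hindep (Λ := fun _ => Λ) hmgf l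
    ((n : ℝ) ^ β * y₁) ht.le
  rw [← ENNReal.ofReal_toReal (measure_ne_top μ _)]
  refine ENNReal.ofReal_le_ofReal (hchernoff.trans (exp_le_exp.mpr ?_))
  linear_combination (-y₁) * htβ + hΛsum

/-- Exponential Chebyshev bound on high level sets: if the common log-Laplace transform `Λ`
of the centered i.i.d. scenery satisfies `Λ(t) ≤ C₀ t²` for `|t| ≤ 1` and
`Λ(t) ≤ C_∞ t^{α*}` for `t ≥ 1`, `l(x) ≥ n^b` for all `x`, and
`∑ l(x)^{α*} ≤ n^{β-b+α*b} y₁/(2C_∞)`, then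
`P(∑ η(x) l(x) ≥ n^β y₁) ≤ exp(-n^{β-b} y₁/2)`. -/
theorem rwrs_high_level_chebyshev {Ω : Type*} [MeasurableSpace Ω] (μ : Measure Ω)
    [IsProbabilityMeasure μ] {ι : Type*} [Fintype ι]
    (η : ι → Ω → ℝ) (hmeas : ∀ x, Measurable (η x))
    (hindep : iIndepFun η μ)
    (hcent : ∀ x, ∫ ω, η x ω ∂μ = 0)
    (Λ : ℝ → ℝ) (hmgf : ∀ x (t : ℝ), ∫ ω, Real.exp (t * η x ω) ∂μ = Real.exp (Λ t))
    (C₀ Cinf : ℝ) (hCinf : 0 < Cinf)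
    (hΛ₀ : ∀ t : ℝ, |t| ≤ 1 → Λ t ≤ C₀ * t ^ 2)
    (αs : ℝ) (hαs : 1 < αs)
    (hΛinf : ∀ t : ℝ, 1 ≤ t → Λ t ≤ Cinf * t ^ αs)
    (n : ℕ) (hn : 1 ≤ n) (b β y₁ : ℝ) (hb : 0 < b) (hy₁ : 0 < y₁)
    (l : ι → ℝ) (hl : ∀ x, (n : ℝ) ^ b ≤ l x)
    (hsum : ∑ x, l x ^ αs ≤ (n : ℝ) ^ (β - b + αs * b) * y₁ / (2 * Cinf)) :
    μ {ω | (n : ℝ) ^ β * y₁ ≤ ∑ x, η x ω * l x}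
      ≤ ENNReal.ofReal (Real.exp (-((n : ℝ) ^ (β - b) * y₁ / 2))) :=
  rwrs_high_level_chebyshev_general μ η hmeas hindep Λ hmgf Cinf hCinf αs hΛinf n hn b β y₁ l hl
    hsum
end
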